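/- Dominant term controls increments: for f, s, t positive infinite with s ≠ t, we have f∘t − f∘s ∼ τ_f∘t − τ_f∘s, where τ_f is the dominant term of f. -/

import Mathlib

/-!
Write `δ = f - τ` and `φ = (· ∘ s)`, `ψ = (· ∘ t)`, ring endomorphisms of `T`. Since `δ ≺ f`,
every `f ± e δ` with `e ∈ R` is still positive infinite, hence has a positive increment; this
bounds `|ψ e · ψ δ - φ e · φ δ|` by the increment of `f`. The constants `e` need not be fixed by
composition, but the identity
`ψ c · φ c · (ψ δ - φ δ) = (ψ c + φ c)(ψ c · ψ δ - φ c · φ δ) - (ψ (c²) · ψ δ - φ (c²) · φ δ)`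
eliminates them once `φ c` and `ψ c` are known to be large, and `c - 1 < c ∘ u` follows by
comparing `c ± x⁻¹` at `u` and at the identity `x`.
-/

/-- `s ≺ t` relative to the coefficient field `R`. -/
def Prec {T : Type*} [Field T] [LinearOrder T] [IsStrictOrderedRing T] (R : Subfield T) (s t : T) : Prop :=
  ∀ r ∈ R, 0 < r → r * |s| < |t|

/-- `s` is positive infinite: `s > R`. -/
def PosInf {T : Type*} [Field T] [LinearOrder T] [IsStrictOrderedRing T] (R : Subfield T) (s : T) : Prop :=
  ∀ r ∈ R, r < s

def RingHom.ofInjective {K L : Type*} [Semiring K] [Nontrivial K] [Ring L] [IsDomain L] (φ : K → L)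
    (map_add : ∀ a b, φ (a + b) = φ a + φ b) (map_mul : ∀ a b, φ (a * b) = φ a * φ b)
    (hφ : Function.Injective φ) : K →+* L :=
  have map_zero : φ 0 = 0 := (AddMonoidHom.mk' φ map_add).map_zero
  { toFun := φ
    map_one' := by
      have h1 : φ 1 ≠ 0 := map_zero ▸ hφ.ne one_ne_zero
      exact mul_left_cancel₀ h1 (by rw [← map_mul, one_mul, mul_one])
    map_mul' := map_mul
    map_zero' := map_zero
    map_add' := map_add }

section

variable {T : Type*} [Field T] [LinearOrder T] [IsStrictOrderedRing T] {R : Subfield T}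

theorem PosInf.pos {f : T} (hf : PosInf R f) : 0 < f := hf 0 R.zero_mem

theorem PosInf.one_lt {f : T} (hf : PosInf R f) : 1 < f := hf 1 R.one_mem

theorem PosInf.notMem {f : T} (hf : PosInf R f) : f ∉ R := fun h => (hf f h).false

theorem PosInf.sub_mul_of_prec {f δ e : T} (hf : PosInf R f) (hδ : Prec R δ f) (he : e ∈ R) :
    PosInf R (f - e * δ) := by
  intro a ha
  have hδf := hδ (2 * |e| + 1) (add_mem (mul_mem (ofNat_mem R 2) (abs_mem_iff.2 he)) R.one_mem)
    (by positivity)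
  have h2a := hf (2 * a) (mul_mem (ofNat_mem R 2) ha)
  rw [abs_of_pos hf.pos] at hδf
  have heδ : e * δ ≤ |e| * |δ| := abs_mul e δ ▸ le_abs_self _
  nlinarith [abs_nonneg δ]

theorem leibniz_map_inv_neg {d : T → T} (hd_mul : ∀ a b : T, d (a * b) = d a * b + a * d b)
    (hd_one : d 1 = 0) {y : T} (hy : 0 < y) (hdy : 0 < d y) : d y⁻¹ < 0 := by
  have h := hd_mul y y⁻¹
  rw [mul_inv_cancel₀ hy.ne', hd_one] at h
  have : y * d y⁻¹ < 0 := by linarith [mul_pos hdy (inv_pos.2 hy)]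
  exact neg_of_mul_neg_right this hy.le

theorem abs_map_mul_sub_lt_of_prec {φ ψ : T →+* T} (hinc : ∀ g, PosInf R g → φ g < ψ g)
    {f δ e : T} (hf : PosInf R f) (hδ : Prec R δ f) (he : e ∈ R) :
    |ψ e * ψ δ - φ e * φ δ| < ψ f - φ f := by
  have hminus := hinc _ (hf.sub_mul_of_prec hδ he)
  have hplus := hinc _ (hf.sub_mul_of_prec hδ (neg_mem he))
  simp only [map_sub, map_mul, map_neg] at hminus hplus
  rw [abs_lt]
  constructor <;> linarith

theorem mul_abs_sub_lt_of_abs_sub_mul_lt {A B a b D r : T} (hr : 0 < r) (hA : 3 * r + 1 ≤ A)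
    (hB : 3 * r + 1 ≤ B) (h₁ : |B * b - A * a| < D) (h₂ : |B ^ 2 * b - A ^ 2 * a| < D) :
    r * |b - a| < D := by
  have hAB : 0 < A * B := by nlinarith
  have key : A * B * |b - a| < (A + B + 1) * D := calc
    A * B * |b - a| = |A * B * (b - a)| := by rw [abs_mul, abs_of_pos hAB]
    _ = |(A + B) * (B * b - A * a) - (B ^ 2 * b - A ^ 2 * a)| := by ring_nf
    _ ≤ (A + B) * |B * b - A * a| + |B ^ 2 * b - A ^ 2 * a| := by
      grw [abs_sub, abs_mul, abs_of_pos (by linarith : 0 < A + B)]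
    _ < (A + B) * D + D := by gcongr; linarith
    _ = (A + B + 1) * D := by ring
  have hD : 0 < D := (abs_nonneg _).trans_lt h₁
  have hr' : r * (A + B + 1) ≤ A * B := by nlinarith
  nlinarith [abs_nonneg (b - a)]

theorem sub_one_lt_comp_of_mem {d : T → T} {comp : T → T → T} {x : T}
    (hd_add : ∀ a b : T, d (a + b) = d a + d b)
    (hd_mul : ∀ a b : T, d (a * b) = d a * b + a * d b)
    (hd_ker : ∀ a : T, d a = 0 ↔ a ∈ R)
    (hH : ∀ f : T, PosInf R f → 0 < d f)
    (hx : PosInf R x)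
    (comp_add : ∀ f g s : T, PosInf R s → comp (f + g) s = comp f s + comp g s)
    (comp_mul : ∀ f g s : T, PosInf R s → comp (f * g) s = comp f s * comp g s)
    (comp_strictMono_left : ∀ s : T, PosInf R s → StrictMono (fun f => comp f s))
    (comp_id_right : ∀ f : T, comp f x = f)
    (hmono : ∀ f : T, f ∉ (R : Set T) → ∀ s t : T, PosInf R s → PosInf R t →
      s < t → (0 < d f → comp f s < comp f t) ∧ (d f < 0 → comp f t < comp f s))
    {c u : T} (hc : c ∈ R) (hu : PosInf R u) : c - 1 < comp c u := by
  let D : T →+ T := AddMonoidHom.mk' d hd_add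
  let φ : T →+* T := RingHom.ofInjective (comp · u) (comp_add · · u hu) (comp_mul · · u hu)
    (comp_strictMono_left u hu).injective
  have hdε : d x⁻¹ < 0 := leibniz_map_inv_neg hd_mul ((hd_ker 1).2 R.one_mem) hx.pos (hH x hx)
  have hdc : d c = 0 := (hd_ker c).2 hc
  have hε : x⁻¹ < 1 := inv_lt_one_of_one_lt₀ hx.one_lt
  have hε' : 0 < x⁻¹ := inv_pos.2 hx.pos
  have hφx : 1 < φ x := by
    have h : φ 1 < φ x := comp_strictMono_left u hu hx.one_lt
    rwa [map_one] at h
  have hφε : φ x⁻¹ < 1 := by rw [map_inv₀]; exact inv_lt_one_of_one_lt₀ hφx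
  have hφε' : 0 < φ x⁻¹ := by rw [map_inv₀]; exact inv_pos.2 (one_pos.trans hφx)
  have notMem {g : T} (hg : d g ≠ 0) : g ∉ (R : Set T) := fun h => hg ((hd_ker g).2 h)
  rcases lt_trichotomy x u with hxu | rfl | hux
  · have hg : 0 < d (c - x⁻¹) := by
      have h : d (c - x⁻¹) = d c - d x⁻¹ := map_sub D c x⁻¹
      linarith
    have h : comp (c - x⁻¹) x < φ (c - x⁻¹) := (hmono _ (notMem hg.ne') x u hx hu hxu).1 hg
    rw [comp_id_right, map_sub] at h
    change c - 1 < φ c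
    linarith
  · rw [comp_id_right]; linarith
  · have hg : d (c + x⁻¹) < 0 := by
      have h : d (c + x⁻¹) = d c + d x⁻¹ := hd_add c x⁻¹
      linarith
    have h : comp (c + x⁻¹) x < φ (c + x⁻¹) := (hmono _ (notMem hg.ne) u x hu hx hux).2 hg
    rw [comp_id_right, map_add] at h
    change c - 1 < φ c
    linarith

end

theorem dominant_term_controls_increments_general (T : Type*) [Field T] [LinearOrder T] [IsStrictOrderedRing T]
    (R : Subfield T) (d : T → T) (comp : T → T → T) (x : T)
    (hd_add : ∀ a b : T, d (a + b) = d a + d b)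
    (hd_mul : ∀ a b : T, d (a * b) = d a * b + a * d b)
    (hd_ker : ∀ a : T, d a = 0 ↔ a ∈ R)
    (hH : ∀ f : T, PosInf R f → 0 < d f)
    (hx : PosInf R x)
    (comp_add : ∀ f g s : T, PosInf R s → comp (f + g) s = comp f s + comp g s)
    (comp_mul : ∀ f g s : T, PosInf R s → comp (f * g) s = comp f s * comp g s)
    (comp_strictMono_left : ∀ s : T, PosInf R s → StrictMono (fun f => comp f s))
    (comp_id_right : ∀ f : T, comp f x = f)
    (hmono : ∀ f : T, f ∉ (R : Set T) → ∀ s t : T, PosInf R s → PosInf R t →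
      s < t → (0 < d f → comp f s < comp f t) ∧ (d f < 0 → comp f t < comp f s))
    (f s t τ : T) (hf : PosInf R f) (hs : PosInf R s) (ht : PosInf R t)
    (hst : s ≠ t) (hτ : Prec R (f - τ) f) :
    Prec R ((comp f t - comp f s) - (comp τ t - comp τ s))
      (comp f t - comp f s) := by
  intro r hrR hr
  wlog hlt : s < t generalizing s t
  · have h := this t s ht hs hst.symm (hst.lt_or_gt.resolve_left hlt)
    rwa [show comp f s - comp f t - (comp τ s - comp τ t)
      = -(comp f t - comp f s - (comp τ t - comp τ s)) by ring, abs_neg,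
      abs_sub_comm (comp f s)] at h
  let compAt (u : T) (hu : PosInf R u) : T →+* T := RingHom.ofInjective (comp · u)
    (comp_add · · u hu) (comp_mul · · u hu) (comp_strictMono_left u hu).injective
  set φ := compAt s hs
  set ψ := compAt t ht
  have hinc (g : T) (hg : PosInf R g) : φ g < ψ g := (hmono g hg.notMem s t hs ht hlt).1 (hH g hg)
  have hc : 3 * r + 2 ∈ R := add_mem (mul_mem (ofNat_mem R 3) hrR) (ofNat_mem R 2)
  have hlarge (u : T) (hu : PosInf R u) : 3 * r + 1 ≤ comp (3 * r + 2) u := by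
    have := sub_one_lt_comp_of_mem hd_add hd_mul hd_ker hH hx comp_add comp_mul
      comp_strictMono_left comp_id_right hmono hc hu
    linarith
  change r * |(ψ f - φ f) - (ψ τ - φ τ)| < |ψ f - φ f|
  rw [abs_of_pos (sub_pos.2 (hinc f hf)), sub_sub_sub_comm, ← map_sub, ← map_sub]
  exact mul_abs_sub_lt_of_abs_sub_mul_lt (A := φ _) (B := ψ _) hr (hlarge s hs) (hlarge t ht)
    (abs_map_mul_sub_lt_of_prec hinc hf hτ hc)
    (by simpa only [map_pow] using abs_map_mul_sub_lt_of_prec hinc hf hτ (pow_mem hc 2))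

/-- the dominant term controls increments: for `f, s, t`
positive infinite with `s ≠ t` and `τ` the dominant term of `f`
(so `f − τ ≺ f`), we have `f∘t − f∘s ∼ τ∘t − τ∘s`. -/
theorem dominant_term_controls_increments (T : Type*) [Field T] [LinearOrder T] [IsStrictOrderedRing T]
    (R : Subfield T) (d : T → T) (comp : T → T → T) (x : T)
    (hd_add : ∀ a b : T, d (a + b) = d a + d b)
    (hd_mul : ∀ a b : T, d (a * b) = d a * b + a * d b)
    (hd_ker : ∀ a : T, d a = 0 ↔ a ∈ R)
    (hH : ∀ f : T, PosInf R f → 0 < d f)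
    (hx : PosInf R x)
    (comp_add : ∀ f g s : T, PosInf R s → comp (f + g) s = comp f s + comp g s)
    (comp_mul : ∀ f g s : T, PosInf R s → comp (f * g) s = comp f s * comp g s)
    (comp_strictMono_left : ∀ s : T, PosInf R s → StrictMono (fun f => comp f s))
    (comp_id_left : ∀ s : T, PosInf R s → comp x s = s)
    (comp_id_right : ∀ f : T, comp f x = f)
    (hmono : ∀ f : T, f ∉ (R : Set T) → ∀ s t : T, PosInf R s → PosInf R t →
      s < t → (0 < d f → comp f s < comp f t) ∧ (d f < 0 → comp f t < comp f s))
    (f s t τ : T) (hf : PosInf R f) (hs : PosInf R s) (ht : PosInf R t)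
    (hst : s ≠ t) (hτ : Prec R (f - τ) f) :
    Prec R ((comp f t - comp f s) - (comp τ t - comp τ s))
      (comp f t - comp f s) :=
  dominant_term_controls_increments_general T R d comp x hd_add hd_mul hd_ker hH hx comp_add
    comp_mul comp_strictMono_left comp_id_right hmono f s t τ hf hs ht hst hτ
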